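/- Let (e₁,e₂,e₃) = (∂ᵧ, ∂ₚ, ∂ₓ + p∂ᵧ) be a frame on ℝ³ with coordinates (x,y,p), and C = span(e₂,e₃). A cubic-in-q ODE y''' = a₃(y'')³ + a₂(y'')² + a₁y'' + a₀ (coefficients functions of (x,y,p)) has its solutions among unparametrized geodesics of a linear connection ∇ with Γ¹₂₂ = Γ¹₍₂₃₎ = Γ¹₃₃ = 0 if and only if Γ³₂₂ = a₃, 2Γ³₍₂₃₎ − Γ²₂₂ = a₂, Γ³₃₃ − 2Γ²₍₂₃₎ = a₁, Γ²₃₃ = −a₀. Specifically: for a curve x ↦ (x, f(x), f'(x)) with tangent V = f''e₂ + e₃, the geodesic condition ∇_V V = λ(V)V is equivalent to f''' = Γ³₂₂(f'')³ + (2Γ³₍₂₃₎ − Γ²₂₂)(f'')² + (Γ³₃₃ − 2Γ²₍₂₃₎)f'' − Γ²₃₃ evaluated along the curve. -/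

import Mathlib

/-- The geodesic-up-to-reparametrization condition ∇_V V = λ(V)·V at the point x for the
lift x ↦ (x, f(x), f'(x)) of a solution, in the frame (e₁,e₂,e₃) = (∂ᵧ, ∂ₚ, ∂ₓ + p∂ᵧ)
(Fin 3 indices 0,1,2), with tangent vector V = f''·e₂ + e₃ and connection
coefficients Γᵏᵢⱼ depending on the point (x,y,p). -/
def geoCond (Γ : Fin 3 → Fin 3 → Fin 3 → ℝ → ℝ → ℝ → ℝ) (f : ℝ → ℝ) (x : ℝ) : Prop :=
  ∃ lam : ℝ,
    (∑ i : Fin 3, ∑ j : Fin 3, Γ 0 i j x (f x) (deriv f x) *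
        ![(0 : ℝ), iteratedDeriv 2 f x, 1] i * ![(0 : ℝ), iteratedDeriv 2 f x, 1] j) = 0 ∧
    iteratedDeriv 3 f x +
      (∑ i : Fin 3, ∑ j : Fin 3, Γ 1 i j x (f x) (deriv f x) *
        ![(0 : ℝ), iteratedDeriv 2 f x, 1] i * ![(0 : ℝ), iteratedDeriv 2 f x, 1] j) =
      lam * iteratedDeriv 2 f x ∧
    (∑ i : Fin 3, ∑ j : Fin 3, Γ 2 i j x (f x) (deriv f x) *
        ![(0 : ℝ), iteratedDeriv 2 f x, 1] i * ![(0 : ℝ), iteratedDeriv 2 f x, 1] j) = lam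

/-- A cubic polynomial curve realizing prescribed 0th–3rd derivatives at `x`. -/
lemma cubic_exists (x y p q c : ℝ) :
    ∃ f : ℝ → ℝ, ContDiff ℝ (⊤ : ℕ∞) f ∧ f x = y ∧ deriv f x = p ∧
      iteratedDeriv 2 f x = q ∧ iteratedDeriv 3 f x = c := by
  refine ⟨fun t => y + p*(t-x) + q/2*(t-x)^2 + c/6*(t-x)^3, ?_, by simp, ?_, ?_, ?_⟩
  · fun_prop
  all_goals {
    have hu : ∀ t : ℝ, HasDerivAt (fun s : ℝ => s - x) 1 t :=
      fun t => (hasDerivAt_id t).sub_const x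
    have h1 : ∀ t : ℝ, HasDerivAt (fun t => y + p*(t-x) + q/2*(t-x)^2 + c/6*(t-x)^3)
        (p + q*(t-x) + c/2*(t-x)^2) t := by
      intro t
      have := (((hasDerivAt_const t y).add ((hu t).const_mul p)).add
        (((hu t).pow 2).const_mul (q/2))).add (((hu t).pow 3).const_mul (c/6))
      convert this using 1 <;> first | rfl | ring | (funext s; simp only [Pi.add_apply, Pi.pow_apply]; ring)
    have h2 : ∀ t : ℝ, HasDerivAt (fun t => p + q*(t-x) + c/2*(t-x)^2)
        (q + c*(t-x)) t := by
      intro t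
      have := ((hasDerivAt_const t p).add ((hu t).const_mul q)).add
        (((hu t).pow 2).const_mul (c/2))
      convert this using 1 <;> first | rfl | ring | (funext s; simp only [Pi.add_apply, Pi.pow_apply]; ring)
    have h3 : ∀ t : ℝ, HasDerivAt (fun t => q + c*(t-x)) c t := by
      intro t
      have := (hasDerivAt_const t q).add ((hu t).const_mul c)
      convert this using 1 <;> first | rfl | ring | (funext s; simp only [Pi.add_apply, Pi.pow_apply]; ring)
    have d1 : deriv (fun t => y + p*(t-x) + q/2*(t-x)^2 + c/6*(t-x)^3) =
        fun t => p + q*(t-x) + c/2*(t-x)^2 := funext fun t => (h1 t).deriv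
    have d2 : deriv (fun t => p + q*(t-x) + c/2*(t-x)^2) =
        fun t => q + c*(t-x) := funext fun t => (h2 t).deriv
    have d3 : deriv (fun t : ℝ => q + c*(t-x)) = fun _ => c := funext fun t => (h3 t).deriv
    simp [iteratedDeriv_succ, iteratedDeriv_one, d1, d2, d3]
  }

/-- Given the vanishing of Γ¹₂₂, Γ¹₍₂₃₎, Γ¹₃₃, the geodesic condition along the lift is
equivalent to the cubic ODE with coefficients built from Γ. -/
lemma geo_iff (Γ : Fin 3 → Fin 3 → Fin 3 → ℝ → ℝ → ℝ → ℝ)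
    (hΓ : ∀ x y p, Γ 0 1 1 x y p = 0 ∧ Γ 0 1 2 x y p + Γ 0 2 1 x y p = 0 ∧
      Γ 0 2 2 x y p = 0) (f : ℝ → ℝ) (x : ℝ) :
    geoCond Γ f x ↔
      iteratedDeriv 3 f x =
        Γ 2 1 1 x (f x) (deriv f x) * (iteratedDeriv 2 f x) ^ 3 +
        (Γ 2 1 2 x (f x) (deriv f x) + Γ 2 2 1 x (f x) (deriv f x) -
          Γ 1 1 1 x (f x) (deriv f x)) * (iteratedDeriv 2 f x) ^ 2 +
        (Γ 2 2 2 x (f x) (deriv f x) -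
          (Γ 1 1 2 x (f x) (deriv f x) + Γ 1 2 1 x (f x) (deriv f x))) *
          iteratedDeriv 2 f x -
        Γ 1 2 2 x (f x) (deriv f x) := by
  obtain ⟨h1, h2, h3⟩ := hΓ x (f x) (deriv f x)
  set q := iteratedDeriv 2 f x with hq
  simp only [geoCond, Fin.sum_univ_three, Matrix.cons_val_zero, Matrix.cons_val_one,
    Matrix.head_cons, Matrix.cons_val_two, Matrix.tail_cons, mul_zero, zero_mul, mul_one,
    zero_add, add_zero]
  constructor
  · rintro ⟨lam, e1, e2, e3⟩
    linear_combination e2 - q * e3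
  · intro h
    refine ⟨Γ 2 1 1 x (f x) (deriv f x) * q ^ 2 +
      (Γ 2 1 2 x (f x) (deriv f x) + Γ 2 2 1 x (f x) (deriv f x)) * q +
      Γ 2 2 2 x (f x) (deriv f x), ?_, ?_, ?_⟩
    · linear_combination q*q*h1 + q*h2 + h3
    · linear_combination h
    · ring

/-- For a connection with Γ¹₂₂ = Γ¹₍₂₃₎ = Γ¹₃₃ = 0, the geodesic condition along lifted
curves is equivalent to the cubic ODE f''' = Γ³₂₂(f'')³ + (2Γ³₍₂₃₎ − Γ²₂₂)(f'')² +
(Γ³₃₃ − 2Γ²₍₂₃₎)f'' − Γ²₃₃; consequently a cubic-in-q ODE has its solutions among the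
geodesics iff the coefficient identities Γ³₂₂ = a₃, 2Γ³₍₂₃₎ − Γ²₂₂ = a₂,
Γ³₃₃ − 2Γ²₍₂₃₎ = a₁, Γ²₃₃ = −a₀ hold. -/
theorem stmt_10 (Γ : Fin 3 → Fin 3 → Fin 3 → ℝ → ℝ → ℝ → ℝ)
    (a₃ a₂ a₁ a₀ : ℝ → ℝ → ℝ → ℝ)
    (hΓ : ∀ x y p, Γ 0 1 1 x y p = 0 ∧ Γ 0 1 2 x y p + Γ 0 2 1 x y p = 0 ∧
      Γ 0 2 2 x y p = 0) :
    (∀ f : ℝ → ℝ, ContDiff ℝ (⊤ : ℕ∞) f → ∀ x : ℝ,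
      (geoCond Γ f x ↔
        iteratedDeriv 3 f x =
          Γ 2 1 1 x (f x) (deriv f x) * (iteratedDeriv 2 f x) ^ 3 +
          (Γ 2 1 2 x (f x) (deriv f x) + Γ 2 2 1 x (f x) (deriv f x) -
            Γ 1 1 1 x (f x) (deriv f x)) * (iteratedDeriv 2 f x) ^ 2 +
          (Γ 2 2 2 x (f x) (deriv f x) -
            (Γ 1 1 2 x (f x) (deriv f x) + Γ 1 2 1 x (f x) (deriv f x))) *
            iteratedDeriv 2 f x -
          Γ 1 2 2 x (f x) (deriv f x))) ∧
    ((∀ x y p, Γ 2 1 1 x y p = a₃ x y p ∧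
        Γ 2 1 2 x y p + Γ 2 2 1 x y p - Γ 1 1 1 x y p = a₂ x y p ∧
        Γ 2 2 2 x y p - (Γ 1 1 2 x y p + Γ 1 2 1 x y p) = a₁ x y p ∧
        Γ 1 2 2 x y p = -a₀ x y p) ↔
      (∀ f : ℝ → ℝ, ContDiff ℝ (⊤ : ℕ∞) f → ∀ x : ℝ,
        (iteratedDeriv 3 f x =
            a₃ x (f x) (deriv f x) * (iteratedDeriv 2 f x) ^ 3 +
            a₂ x (f x) (deriv f x) * (iteratedDeriv 2 f x) ^ 2 +
            a₁ x (f x) (deriv f x) * iteratedDeriv 2 f x +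
            a₀ x (f x) (deriv f x)) ↔ geoCond Γ f x)) := by
  have main := geo_iff Γ hΓ
  refine ⟨fun f _ x => main f x, ?_, ?_⟩
  · intro hc f hf x
    rw [main f x]
    obtain ⟨c1, c2, c3, c4⟩ := hc x (f x) (deriv f x)
    set q := iteratedDeriv 2 f x with hq
    constructor
    · intro h
      linear_combination h - q^3*c1 - q^2*c2 - q*c3 + c4
    · intro h
      linear_combination h + q^3*c1 + q^2*c2 + q*c3 - c4
  · intro h x y p
    have key : ∀ q : ℝ,
        Γ 2 1 1 x y p * q ^ 3 +
          (Γ 2 1 2 x y p + Γ 2 2 1 x y p - Γ 1 1 1 x y p) * q ^ 2 +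
          (Γ 2 2 2 x y p - (Γ 1 1 2 x y p + Γ 1 2 1 x y p)) * q -
          Γ 1 2 2 x y p =
        a₃ x y p * q ^ 3 + a₂ x y p * q ^ 2 + a₁ x y p * q + a₀ x y p := by
      intro q
      obtain ⟨f, hf, hfx, hfd, hf2, hf3⟩ := cubic_exists x y p q
        (Γ 2 1 1 x y p * q ^ 3 +
          (Γ 2 1 2 x y p + Γ 2 2 1 x y p - Γ 1 1 1 x y p) * q ^ 2 +
          (Γ 2 2 2 x y p - (Γ 1 1 2 x y p + Γ 1 2 1 x y p)) * q -
          Γ 1 2 2 x y p)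
      have hiff := h f hf x
      rw [main f x] at hiff
      rw [hfx, hfd, hf2, hf3] at hiff
      exact hiff.2 rfl
    have k0 := key 0
    have k1 := key 1
    have km := key (-1)
    have k2 := key 2
    norm_num at k0 k1 km k2
    refine ⟨by linarith, by linarith, by linarith, by linarith⟩
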